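/- Let $\phi\in C^3([0,\infty))$ with $\phi(0)=\phi'(0)=0$, and let $\bar u\in C^3([0,\infty))$ with $\bar u(0)=0$, $\bar u'(0)>0$, $\bar u(y)>0$ for $y>0$, and $\bar u, \bar u',\bar u'',\bar u'''$ bounded with $\bar u\geq m\min(y,1)$ for some $m>0$. Then $g:=\phi/\bar u$ extends to a function on $[0,\infty)$ with $g(0)=0$, and on any interval $[0,1]$, $\|g''\|_{L^2(0,1)}\leq C(\|\phi'''\|_{L^2(0,2)}+\|\phi''\|_{L^2(0,2)})$ with $C$ depending only on $m$ and the bounds on $\bar u$ and its derivatives. -/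

import Mathlib

/-!
Away from `y = 0` the quotient `g = φ / ū` satisfies `g'' = N / ū³` with
`N = φ'' ū² - 2 φ' ū' ū - φ ū'' ū + 2 φ ū'²`. Since `N` is linear in `(φ, φ', φ'')`, split `φ`
into its Taylor polynomial `a y² / 2` (`a = φ''(0)`) and a remainder. The remainder and its
derivatives are bounded by `J(y) y², J(y) y, J(y)` with `J(y) = ∫₀ʸ |φ'''|`, giving
`O(J(y) y²)`; on the polynomial, `N` equals `a ((ū - y ū')² - y² ū ū'' / 2) = O(|a| y³)` because
`ū(0) = 0`. With `ū ≥ m y` this gives `|g''(y)| ≲ |a| + J(y) / y`. Hardy's inequality bounds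
`J(y) / y` in `L²(0, 1)` by `2 ‖φ'''‖`, and the one-dimensional Sobolev inequality bounds `|a|`
by `‖φ''‖ + ‖φ'''‖` on `(0, 2)`.
-/

open MeasureTheory Set Filter Topology

theorem integral_mul_le_sqrt_mul_sqrt {α : Type*} [MeasurableSpace α] {μ : Measure α}
    {f g : α → ℝ} (hf : MemLp f 2 μ) (hg : MemLp g 2 μ) :
    ∫ x, f x * g x ∂μ ≤ √(∫ x, f x ^ 2 ∂μ) * √(∫ x, g x ^ 2 ∂μ) := by
  have holder := integral_mul_norm_le_Lp_mul_Lq .two_two (by simpa using hf) (by simpa using hg)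
  simp only [Real.norm_eq_abs, Real.rpow_two, sq_abs, ← Real.sqrt_eq_rpow] at holder
  calc ∫ x, f x * g x ∂μ ≤ ‖∫ x, f x * g x ∂μ‖ := le_abs_self _
    _ ≤ ∫ x, ‖f x * g x‖ ∂μ := norm_integral_le_integral_norm _
    _ ≤ _ := by simpa only [norm_mul, Real.norm_eq_abs] using holder

theorem integral_abs_le_sqrt_mul_sqrt {α : Type*} [MeasurableSpace α] {μ : Measure α}
    [IsFiniteMeasure μ] {h : α → ℝ} (hh : MemLp h 2 μ) :
    ∫ x, |h x| ∂μ ≤ √(μ.real univ) * √(∫ x, h x ^ 2 ∂μ) := by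
  have := integral_mul_le_sqrt_mul_sqrt (f := fun x => |h x|) hh.abs (memLp_const (1 : ℝ))
  simp only [mul_one, sq_abs, one_pow, integral_const, smul_eq_mul] at this
  rwa [mul_comm] at this

theorem memLp_restrict_of_continuousOn_of_bound {α E : Type*} [TopologicalSpace α]
    [MeasurableSpace α] [OpensMeasurableSpace α] [NormedAddCommGroup E]
    [SecondCountableTopologyEither α E] {μ : Measure α} {f : α → E} {s : Set α} {C : ℝ}
    (hs : MeasurableSet s) (hμs : μ s < ⊤) (hf : ContinuousOn f s) (hC : ∀ x ∈ s, ‖f x‖ ≤ C)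
    (p : ENNReal) : MemLp f p (μ.restrict s) :=
  have : IsFiniteMeasure (μ.restrict s) := isFiniteMeasure_restrict.mpr hμs.ne
  .of_bound (hf.aestronglyMeasurable hs) C ((ae_restrict_iff' hs).mpr (.of_forall hC))

theorem Continuous.memLp_restrict_Ioo {f : ℝ → ℝ} (hf : Continuous f) (a b : ℝ)
    (p : ENNReal) : MemLp f p (volume.restrict (Ioo a b)) := by
  obtain ⟨C, hC⟩ := isCompact_Icc.exists_bound_of_continuousOn (hf.continuousOn (s := Icc a b))
  exact memLp_restrict_of_continuousOn_of_bound measurableSet_Ioo measure_Ioo_lt_top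
    hf.continuousOn (fun x hx => hC x (Ioo_subset_Icc_self hx)) p

theorem integral_sq_le_of_abs_le_add {X : Type*} [MeasurableSpace X] {μ : Measure X}
    {s : Set X} {G F : X → ℝ} {α β : ℝ} (hs : MeasurableSet s) (hμs : μ s < ⊤)
    (hF : IntegrableOn (fun x => F x ^ 2) s μ) (h : ∀ x ∈ s, |G x| ≤ α + β * F x) :
    ∫ x in s, G x ^ 2 ∂μ ≤ 2 * α ^ 2 * μ.real s + 2 * β ^ 2 * ∫ x in s, F x ^ 2 ∂μ := by
  have hconst : IntegrableOn (fun _ => 2 * α ^ 2) s μ := integrableOn_const hμs.ne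
  calc ∫ x in s, G x ^ 2 ∂μ ≤ ∫ x in s, (2 * α ^ 2 + 2 * β ^ 2 * F x ^ 2) ∂μ := by
        refine integral_mono_of_nonneg (.of_forall fun _ => sq_nonneg _)
          (hconst.add (hF.const_mul _)) ((ae_restrict_iff' hs).mpr (.of_forall fun x hx => ?_))
        show G x ^ 2 ≤ 2 * α ^ 2 + 2 * β ^ 2 * F x ^ 2
        nlinarith [h x hx, sq_abs (G x), abs_nonneg (G x), sq_nonneg (α - β * F x)]
    _ = _ := by
        rw [integral_add hconst (hF.const_mul _), setIntegral_const, integral_const_mul,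
          smul_eq_mul]
        ring

theorem abs_sub_le_mul_of_abs_deriv_le {F F' : ℝ → ℝ} (hF : ∀ x, HasDerivAt F (F' x) x)
    {K y : ℝ} (hy : 0 ≤ y) (hK : ∀ x ∈ Ico 0 y, |F' x| ≤ K) : |F y - F 0| ≤ K * y := by
  simpa using norm_image_sub_le_of_norm_deriv_le_segment'
    (fun x _ => (hF x).hasDerivWithinAt) hK y ⟨hy, le_rfl⟩

theorem abs_sub_le_integral_abs_deriv {h : ℝ → ℝ} (hh : ContDiff ℝ 1 h) {y : ℝ} (hy : 0 ≤ y) :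
    |h y - h 0| ≤ ∫ s in 0..y, |deriv h s| := by
  rw [← intervalIntegral.integral_eq_sub_of_hasDerivAt
    (fun x _ => (hh.differentiable one_ne_zero x).hasDerivAt)
    ((hh.continuous_deriv le_rfl).intervalIntegrable 0 y)]
  exact intervalIntegral.abs_integral_le_integral_abs hy

theorem integral_abs_deriv_mono {φ : ℝ → ℝ} (hφ : ContDiff ℝ 1 φ) {s y : ℝ} (hs : 0 ≤ s)
    (hsy : s ≤ y) :
    ∫ x in 0..s, |deriv φ x| ≤ ∫ x in 0..y, |deriv φ x| :=
  intervalIntegral.integral_mono_interval le_rfl hs hsy (.of_forall fun _ => abs_nonneg _)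
    ((hφ.continuous_deriv le_rfl).abs.intervalIntegrable 0 y)

theorem sqrt_mul_abs_apply_zero_le {h : ℝ → ℝ} (hh : ContDiff ℝ 1 h) {L : ℝ} (hL : 0 ≤ L) :
    √L * |h 0| ≤ √(∫ x in Ioo 0 L, h x ^ 2) + L * √(∫ x in Ioo 0 L, deriv h x ^ 2) := by
  set J := ∫ s in 0..L, |deriv h s|
  have hvol : volume.real (Ioo 0 L) = L := by simp [hL]
  have hpt (z : ℝ) (hz : z ∈ Ioo 0 L) : |h 0| ≤ |h z| + J :=
    calc |h 0| ≤ |h z| + |h z - h 0| := by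
          linarith [abs_sub_abs_le_abs_sub (h 0) (h z), abs_sub_comm (h z) (h 0)]
      _ ≤ |h z| + J := by
          gcongr
          exact (abs_sub_le_integral_abs_deriv hh hz.1.le).trans
            (integral_abs_deriv_mono hh hz.1.le hz.2.le)
  have hhL2 := hh.continuous.memLp_restrict_Ioo 0 L 2
  have hmean : L * |h 0| ≤ (∫ x in Ioo 0 L, |h x|) + L * J := by
    have habs : IntegrableOn (fun x => |h x|) (Ioo 0 L) := (hhL2.integrable one_le_two).abs
    have hconst : IntegrableOn (fun _ => J) (Ioo 0 L) := integrableOn_const (by simp)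
    have := setIntegral_mono_on (g := fun x => |h x| + J) (integrableOn_const (by simp))
      (habs.add hconst) measurableSet_Ioo hpt
    rwa [setIntegral_const, integral_add habs hconst, setIntegral_const, hvol, smul_eq_mul,
      smul_eq_mul] at this
  have hh₀ := integral_abs_le_sqrt_mul_sqrt hhL2
  have hJ := integral_abs_le_sqrt_mul_sqrt
    ((hh.continuous_deriv le_rfl).memLp_restrict_Ioo 0 L 2)
  rw [measureReal_restrict_apply_univ, hvol] at hh₀ hJ
  rw [← integral_Ioc_eq_integral_Ioo, ← intervalIntegral.integral_of_le hL] at hJ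
  rcases hL.eq_or_lt with rfl | hL₀
  · simp only [Real.sqrt_zero, zero_mul, add_zero]
    positivity
  refine le_of_mul_le_mul_left ?_ (Real.sqrt_pos.mpr hL₀)
  calc √L * (√L * |h 0|) = L * |h 0| := by rw [← mul_assoc, Real.mul_self_sqrt hL]
    _ ≤ (∫ x in Ioo 0 L, |h x|) + L * J := hmean
    _ ≤ √L * √(∫ x in Ioo 0 L, h x ^ 2) + L * (√L * √(∫ x in Ioo 0 L, deriv h x ^ 2)) := by
      gcongr
    _ = _ := by ring

theorem abs_deriv_sub_taylor_le {φ : ℝ → ℝ} {y : ℝ} (hφ : ContDiff ℝ 3 φ) (hy : 0 ≤ y) :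
    |deriv φ y - deriv φ 0 - deriv (deriv φ) 0 * y| ≤
      (∫ s in 0..y, |deriv (deriv (deriv φ)) s|) * y := by
  have hφ' : ContDiff ℝ 2 (deriv φ) := hφ.deriv'
  have hφ'' : ContDiff ℝ 1 (deriv (deriv φ)) := hφ'.deriv'
  have hF (x : ℝ) : HasDerivAt (fun z => deriv φ z - deriv (deriv φ) 0 * z)
      (deriv (deriv φ) x - deriv (deriv φ) 0) x := by
    simpa using ((hφ'.differentiable two_ne_zero x).hasDerivAt).fun_sub
      ((hasDerivAt_id x).const_mul (deriv (deriv φ) 0))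
  convert abs_sub_le_mul_of_abs_deriv_le hF hy (fun x hx =>
    (abs_sub_le_integral_abs_deriv hφ'' hx.1).trans
      (integral_abs_deriv_mono hφ'' hx.1 hx.2.le)) using 2
  ring

theorem abs_sub_taylor_le {φ : ℝ → ℝ} {y : ℝ} (hφ : ContDiff ℝ 3 φ) (hy : 0 ≤ y) :
    |φ y - φ 0 - deriv φ 0 * y - deriv (deriv φ) 0 / 2 * y ^ 2| ≤
      (∫ s in 0..y, |deriv (deriv (deriv φ)) s|) * y ^ 2 := by
  have hφ'' : ContDiff ℝ 1 (deriv (deriv φ)) := hφ.deriv'.deriv'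
  have hF (x : ℝ) : HasDerivAt (fun z => φ z - deriv φ 0 * z - deriv (deriv φ) 0 / 2 * z ^ 2)
      (deriv φ x - deriv φ 0 - deriv (deriv φ) 0 * x) x := by
    refine ((((hφ.differentiable (by norm_num) x).hasDerivAt).fun_sub
      ((hasDerivAt_id x).const_mul (deriv φ 0))).fun_sub
      ((hasDerivAt_pow 2 x).const_mul (deriv (deriv φ) 0 / 2))).congr_deriv ?_
    norm_num
    ring
  convert abs_sub_le_mul_of_abs_deriv_le hF hy (fun x hx =>
    (abs_deriv_sub_taylor_le hφ hx.1).trans <|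
      mul_le_mul (integral_abs_deriv_mono hφ'' hx.1 hx.2.le) hx.2.le hx.1
        (intervalIntegral.integral_nonneg hy fun _ _ => abs_nonneg _)) using 1
  · congr 1; ring
  · ring

theorem abs_sub_mul_deriv_le {u : ℝ → ℝ} (hu : ContDiff ℝ 2 u) {A y : ℝ} (hy : 0 ≤ y)
    (hA : ∀ x ∈ Ico 0 y, |deriv (deriv u) x| ≤ A) : |u y - y * deriv u y - u 0| ≤ A * y ^ 2 := by
  have hu' : ContDiff ℝ 1 (deriv u) := hu.deriv'
  have hF (x : ℝ) : HasDerivAt (fun z => u z - z * deriv u z) (-(x * deriv (deriv u) x)) x := by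
    refine (((hu.differentiable two_ne_zero x).hasDerivAt).fun_sub
      ((hasDerivAt_id x).fun_mul (hu'.differentiable one_ne_zero x).hasDerivAt)).congr_deriv ?_
    simp only [id, one_mul]
    ring
  have := abs_sub_le_mul_of_abs_deriv_le hF hy (K := y * A) fun x hx => by
    rw [abs_neg, abs_mul, abs_of_nonneg hx.1]
    exact mul_le_mul hx.2.le (hA x hx) (abs_nonneg _) hy
  convert this using 1
  · congr 1; ring
  · ring

theorem abs_integral_div_le_of_abs_le {f : ℝ → ℝ} {b M y : ℝ}
    (hM : ∀ x ∈ Icc 0 b, |f x| ≤ M) (hy : y ∈ Ioc 0 b) :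
    |(∫ s in 0..y, f s) / y| ≤ M := by
  rw [abs_div, abs_of_pos hy.1, div_le_iff₀ hy.1]
  simpa [abs_of_pos hy.1] using intervalIntegral.norm_integral_le_of_norm_le_const
    (a := 0) (b := y) (C := M) (f := f) fun x hx => by
      rw [uIoc_of_le hy.1.le] at hx
      exact hM x ⟨hx.1.le, hx.2.trans hy.2⟩

theorem memLp_integral_div {f : ℝ → ℝ} (hf : Continuous f) (b : ℝ) (p : ENNReal) :
    MemLp (fun y => (∫ s in 0..y, f s) / y) p (volume.restrict (Ioo 0 b)) := by
  obtain ⟨M, hM⟩ := isCompact_Icc.exists_bound_of_continuousOn (hf.continuousOn (s := Icc 0 b))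
  refine memLp_restrict_of_continuousOn_of_bound measurableSet_Ioo measure_Ioo_lt_top ?_
    (fun y hy => abs_integral_div_le_of_abs_le hM (Ioo_subset_Ioc_self hy)) p
  have hJ := intervalIntegral.continuous_primitive (μ := volume)
    (fun a b => hf.intervalIntegrable a b) 0
  exact hJ.continuousOn.div continuousOn_id fun y hy => hy.1.ne'

theorem continuousOn_sq_integral_div {f : ℝ → ℝ} (hf : Continuous f) (b : ℝ) :
    ContinuousOn (fun y => (∫ s in 0..y, f s) ^ 2 / y) (Icc 0 b) := by
  have hJ := intervalIntegral.continuous_primitive (μ := volume)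
    (fun a b => hf.intervalIntegrable a b) 0
  intro y hy
  rcases hy.1.eq_or_lt with rfl | hy₀
  · obtain ⟨M, hM⟩ :=
      isCompact_Icc.exists_bound_of_continuousOn (hf.continuousOn (s := Icc 0 b))
    have hbound : ∀ z ∈ Icc 0 b, ‖(∫ s in 0..z, f s) ^ 2 / z‖ ≤ z * M ^ 2 := by
      intro z hz
      rcases hz.1.eq_or_lt with rfl | hz₀
      · simp
      have hsq : (∫ s in 0..z, f s) ^ 2 / z = z * ((∫ s in 0..z, f s) / z) ^ 2 := by field_simp
      rw [Real.norm_eq_abs, hsq, abs_mul, abs_of_pos hz₀, abs_pow]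
      gcongr
      exact abs_integral_div_le_of_abs_le hM ⟨hz₀, hz.2⟩
    have hlim : Tendsto (fun z => z * M ^ 2) (𝓝[Icc 0 b] 0) (𝓝 0) :=
      ((continuous_id.mul continuous_const).tendsto' 0 0 (by simp)).mono_left nhdsWithin_le_nhds
    simpa [ContinuousWithinAt] using
      squeeze_zero_norm' (eventually_nhdsWithin_of_forall hbound) hlim
  · exact ((hJ.continuousAt.pow 2).div continuousAt_id hy₀.ne').continuousWithinAt

theorem hardy_inequality {f : ℝ → ℝ} (hf : Continuous f) {b : ℝ} (hb : 0 ≤ b) :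
    ∫ y in Ioo 0 b, ((∫ s in 0..y, f s) / y) ^ 2 ≤ 4 * ∫ y in Ioo 0 b, f y ^ 2 := by
  set J : ℝ → ℝ := fun y => ∫ s in 0..y, f s
  set F : ℝ → ℝ := fun y => J y / y
  have hFL2 : MemLp F 2 (volume.restrict (Ioo 0 b)) := memLp_integral_div hf b 2
  have hfL2 : MemLp f 2 (volume.restrict (Ioo 0 b)) := hf.memLp_restrict_Ioo 0 b 2
  have hFf : IntegrableOn (fun y => F y * f y) (Ioo 0 b) := hFL2.integrable_mul hfL2
  -- `J² / y` is a primitive of `2 F f - F²` on `[0, b]` (its junk value `0` at `y = 0` is also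
  -- its limit there), so `‖F‖² ≤ 2 ∫ F f ≤ 2 ‖F‖ ‖f‖`.
  have hderiv (y : ℝ) (hy : y ∈ Ioo 0 b) :
      HasDerivAt (fun y => J y ^ 2 / y) (2 * (F y * f y) - F y ^ 2) y := by
    refine ((((hf.integral_hasStrictDerivAt 0 y).hasDerivAt).fun_pow 2).div (hasDerivAt_id y)
      hy.1.ne').congr_deriv ?_
    simp only [F, J, id]
    field_simp
    ring
  have hftc := intervalIntegral.integral_eq_sub_of_hasDerivAt_of_le hb
    (continuousOn_sq_integral_div hf b) hderiv
    ((intervalIntegrable_iff_integrableOn_Ioo_of_le hb).mpr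
      ((hFf.const_mul 2).sub hFL2.integrable_sq))
  rw [intervalIntegral.integral_of_le hb, integral_Ioc_eq_integral_Ioo,
    integral_sub (hFf.const_mul 2) hFL2.integrable_sq, integral_const_mul, div_zero,
    sub_zero] at hftc
  have hcs := integral_mul_le_sqrt_mul_sqrt hFL2 hfL2
  set X := ∫ y in Ioo 0 b, F y ^ 2
  set Y := ∫ y in Ioo 0 b, f y ^ 2
  have hsX := Real.sq_sqrt (setIntegral_nonneg measurableSet_Ioo fun _ _ => sq_nonneg _ : 0 ≤ X)
  have hsY := Real.sq_sqrt (setIntegral_nonneg measurableSet_Ioo fun _ _ => sq_nonneg _ : 0 ≤ Y)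
  have hJb : 0 ≤ J b ^ 2 / b := by positivity
  have : √X ≤ 2 * √Y := by nlinarith [Real.sqrt_nonneg X, Real.sqrt_nonneg Y]
  nlinarith [Real.sqrt_nonneg X, Real.sqrt_nonneg Y]

theorem integral_sq_integral_abs_div_le {f : ℝ → ℝ} (hf : Continuous f) {b L : ℝ} (hb : 0 ≤ b)
    (hbL : b ≤ L) :
    ∫ y in Ioo 0 b, ((∫ s in 0..y, |f s|) / y) ^ 2 ≤ 4 * ∫ y in Ioo 0 L, f y ^ 2 :=
  calc _ ≤ 4 * ∫ y in Ioo 0 b, |f y| ^ 2 := hardy_inequality hf.abs hb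
    _ ≤ 4 * ∫ y in Ioo 0 L, f y ^ 2 := by
      simp only [sq_abs]
      exact mul_le_mul_of_nonneg_left (setIntegral_mono_set
        (hf.memLp_restrict_Ioo 0 L 2).integrable_sq (.of_forall fun _ => sq_nonneg _)
        (Ioo_subset_Ioo_right hbL).eventuallyLE) zero_le_four

def quotientNumerator (p p' p'' q q' q'' : ℝ) : ℝ :=
  p'' * q ^ 2 - 2 * p' * q' * q - p * q'' * q + 2 * p * q' ^ 2

theorem deriv_deriv_div {φ u : ℝ → ℝ} (hφ : ContDiff ℝ 2 φ) (hu : ContDiff ℝ 2 u) {y : ℝ}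
    (hy : u y ≠ 0) :
    deriv (deriv fun z => φ z / u z) y =
      quotientNumerator (φ y) (deriv φ y) (deriv (deriv φ) y) (u y) (deriv u y)
        (deriv (deriv u) y) / u y ^ 3 := by
  have hφd : Differentiable ℝ φ := hφ.differentiable two_ne_zero
  have hud : Differentiable ℝ u := hu.differentiable two_ne_zero
  have hφ'd : Differentiable ℝ (deriv φ) := hφ.deriv'.differentiable one_ne_zero
  have hu'd : Differentiable ℝ (deriv u) := hu.deriv'.differentiable one_ne_zero
  have hfirst : deriv (fun z => φ z / u z) =ᶠ[𝓝 y]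
      fun z => (deriv φ z * u z - φ z * deriv u z) / u z ^ 2 := by
    filter_upwards [hud.continuous.continuousAt.eventually_ne hy] with z hz
    exact deriv_div (hφd z) (hud z) hz
  have hnum := ((hφ'd y).hasDerivAt.fun_mul (hud y).hasDerivAt).fun_sub
    ((hφd y).hasDerivAt.fun_mul (hu'd y).hasDerivAt)
  rw [hfirst.deriv_eq, (hnum.fun_div ((hud y).hasDerivAt.fun_pow 2) (pow_ne_zero 2 hy)).deriv]
  unfold quotientNumerator
  field_simp
  ring

theorem quotientNumerator_eq_add_taylor (p p' p'' q q' q'' a y : ℝ) :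
    quotientNumerator p p' p'' q q' q'' =
      a * quotientNumerator (y ^ 2 / 2) y 1 q q' q'' +
        quotientNumerator (p - a / 2 * y ^ 2) (p' - a * y) (p'' - a) q q' q'' := by
  unfold quotientNumerator
  ring

theorem abs_quotientNumerator_le {p p' p'' q q' q'' A J y : ℝ} (hy₀ : 0 ≤ y) (hy₁ : y ≤ 1)
    (hp : |p| ≤ J * y ^ 2) (hp' : |p'| ≤ J * y) (hp'' : |p''| ≤ J)
    (hq : |q| ≤ A * y) (hq' : |q'| ≤ A) (hq'' : |q''| ≤ A) :
    |quotientNumerator p p' p'' q q' q''| ≤ 6 * A ^ 2 * J * y ^ 2 := by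
  have hA : 0 ≤ A := (abs_nonneg _).trans hq'
  have hJ : 0 ≤ J := (abs_nonneg _).trans hp''
  have h₁ : |p'' * q ^ 2| ≤ J * (A * y) ^ 2 := by rw [abs_mul, abs_pow]; gcongr
  have h₂ : |2 * p' * q' * q| ≤ 2 * (J * y) * A * (A * y) := by
    simp only [abs_mul, abs_two]; gcongr
  have h₃ : |p * q'' * q| ≤ J * y ^ 2 * A * (A * y) := by simp only [abs_mul]; gcongr
  have h₄ : |2 * p * q' ^ 2| ≤ 2 * (J * y ^ 2) * A ^ 2 := by
    simp only [abs_mul, abs_two, abs_pow]; gcongr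
  have hy₃ : J * y ^ 2 * A * (A * y) ≤ A ^ 2 * J * y ^ 2 := by
    have : 0 ≤ A ^ 2 * J * y ^ 2 := by positivity
    nlinarith
  unfold quotientNumerator
  rw [abs_le] at *
  constructor <;> linarith

-- On the quadratic `y² / 2` the numerator is `(q - y q')² - y² q q'' / 2`, which is `O(y³)`
-- as soon as `q` vanishes at `0`.
theorem abs_quotientNumerator_half_sq_le {q q' q'' A y : ℝ} (hy₀ : 0 ≤ y) (hy₁ : y ≤ 1)
    (hq : |q| ≤ A * y) (hq'' : |q''| ≤ A) (hqq' : |q - y * q'| ≤ A * y ^ 2) :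
    |quotientNumerator (y ^ 2 / 2) y 1 q q' q''| ≤ 2 * A ^ 2 * y ^ 3 := by
  have hA : 0 ≤ A := (abs_nonneg _).trans hq''
  have h₁ : |(q - y * q') ^ 2| ≤ (A * y ^ 2) ^ 2 := by rw [abs_pow]; gcongr
  have h₂ : |y ^ 2 / 2 * q * q''| ≤ y ^ 2 / 2 * (A * y) * A := by
    simp only [abs_mul, abs_div, abs_two, abs_pow, abs_of_nonneg hy₀]; gcongr
  have hy₄ : (A * y ^ 2) ^ 2 ≤ A ^ 2 * y ^ 3 := by
    have : 0 ≤ A ^ 2 * y ^ 3 := by positivity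
    nlinarith
  rw [show quotientNumerator (y ^ 2 / 2) y 1 q q' q'' =
    (q - y * q') ^ 2 - y ^ 2 / 2 * q * q'' by unfold quotientNumerator; ring]
  rw [abs_le] at *
  constructor <;> linarith

theorem abs_quotientNumerator_le_of_taylor {p p' p'' q q' q'' a A J y : ℝ} (hy₀ : 0 ≤ y)
    (hy₁ : y ≤ 1) (hp : |p - a / 2 * y ^ 2| ≤ J * y ^ 2) (hp' : |p' - a * y| ≤ J * y)
    (hp'' : |p'' - a| ≤ J) (hq : |q| ≤ A * y) (hq' : |q'| ≤ A) (hq'' : |q''| ≤ A)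
    (hqq' : |q - y * q'| ≤ A * y ^ 2) :
    |quotientNumerator p p' p'' q q' q''| ≤ A ^ 2 * (2 * |a| * y ^ 3 + 6 * J * y ^ 2) := by
  rw [quotientNumerator_eq_add_taylor p p' p'' q q' q'' a y]
  calc _ ≤ |a| * |quotientNumerator (y ^ 2 / 2) y 1 q q' q''| +
        |quotientNumerator (p - a / 2 * y ^ 2) (p' - a * y) (p'' - a) q q' q''| := by
        rw [← abs_mul]; exact abs_add_le _ _
    _ ≤ |a| * (2 * A ^ 2 * y ^ 3) + 6 * A ^ 2 * J * y ^ 2 := by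
        gcongr
        · exact abs_quotientNumerator_half_sq_le hy₀ hy₁ hq hq'' hqq'
        · exact abs_quotientNumerator_le hy₀ hy₁ hp hp' hp'' hq hq' hq''
    _ = _ := by ring

theorem abs_deriv_deriv_div_le {φ u : ℝ → ℝ} {m A y : ℝ} (hφ : ContDiff ℝ 3 φ)
    (hu : ContDiff ℝ 2 u) (hφ₀ : φ 0 = 0) (hφ₁ : deriv φ 0 = 0) (hu₀ : u 0 = 0)
    (hu' : ∀ x, 0 ≤ x → |deriv u x| ≤ A) (hu'' : ∀ x, 0 ≤ x → |deriv (deriv u) x| ≤ A)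
    (hm : 0 < m) (hy : y ∈ Ioo 0 1) (hmu : m * y ≤ u y) :
    |deriv (deriv fun z => φ z / u z) y| ≤
      A ^ 2 / m ^ 3 *
        (2 * |deriv (deriv φ) 0| + 6 * ((∫ s in 0..y, |deriv (deriv (deriv φ)) s|) / y)) := by
  obtain ⟨hy₀, hy₁⟩ := hy
  set a := deriv (deriv φ) 0
  set J := ∫ s in 0..y, |deriv (deriv (deriv φ)) s|
  have hJ : 0 ≤ J := intervalIntegral.integral_nonneg hy₀.le fun _ _ => abs_nonneg _
  have hupos : 0 < u y := (by positivity : 0 < m * y).trans_le hmu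
  have hu_le : |u y| ≤ A * y := by
    simpa [hu₀] using abs_sub_le_mul_of_abs_deriv_le
      (fun x => (hu.differentiable two_ne_zero x).hasDerivAt) hy₀.le fun x hx => hu' x hx.1
  have hnum := abs_quotientNumerator_le_of_taylor (a := a) (J := J) hy₀.le hy₁.le
    (by simpa [hφ₀, hφ₁] using abs_sub_taylor_le hφ hy₀.le)
    (by simpa [hφ₁] using abs_deriv_sub_taylor_le hφ hy₀.le)
    (abs_sub_le_integral_abs_deriv hφ.deriv'.deriv' hy₀.le) hu_le (hu' y hy₀.le) (hu'' y hy₀.le)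
    (by simpa [hu₀] using abs_sub_mul_deriv_le hu hy₀.le fun x hx => hu'' x hx.1)
  rw [deriv_deriv_div (hφ.of_le (by norm_num)) hu hupos.ne', abs_div, abs_pow, abs_of_pos hupos,
    div_le_iff₀ (by positivity)]
  calc _ ≤ A ^ 2 * (2 * |a| * y ^ 3 + 6 * J * y ^ 2) := hnum
    _ = A ^ 2 / m ^ 3 * (2 * |a| + 6 * (J / y)) * (m * y) ^ 3 := by field_simp
    _ ≤ _ := by gcongr

theorem stmt14_general (m A : ℝ) (hm : 0 < m) :
    ∃ C > 0, ∀ (φ ub : ℝ → ℝ),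
      ContDiff ℝ 3 φ → ContDiff ℝ 3 ub →
      φ 0 = 0 → deriv φ 0 = 0 →
      ub 0 = 0 → 0 < deriv ub 0 → (∀ y : ℝ, 0 < y → 0 < ub y) →
      (∀ y : ℝ, 0 ≤ y →
        |ub y| ≤ A ∧ |deriv ub y| ≤ A ∧ |deriv (deriv ub) y| ≤ A ∧
          |deriv (deriv (deriv ub)) y| ≤ A) →
      (∀ y : ℝ, 0 ≤ y → m * min y 1 ≤ ub y) →
      -- the quotient extends with value `0` at `y = 0`
      (fun y => φ y / ub y) 0 = 0 ∧
      Real.sqrt (∫ y in Ioo (0:ℝ) 1, deriv (deriv (fun y' => φ y' / ub y')) y ^ 2)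
        ≤ C * (Real.sqrt (∫ y in Ioo (0:ℝ) 2, deriv (deriv (deriv φ)) y ^ 2)
          + Real.sqrt (∫ y in Ioo (0:ℝ) 2, deriv (deriv φ) y ^ 2)) := by
  refine ⟨18 * (A ^ 2 / m ^ 3) + 1, by positivity, ?_⟩
  intro φ ub hφ hub hφ₀ hφ₁ hub₀ _ _ hbound hlow
  refine ⟨by simp [hub₀], ?_⟩
  set P := ∫ y in Ioo (0:ℝ) 2, deriv (deriv (deriv φ)) y ^ 2
  set Q := ∫ y in Ioo (0:ℝ) 2, deriv (deriv φ) y ^ 2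
  set N := √P + √Q
  set c := A ^ 2 / m ^ 3
  have hφ'' : ContDiff ℝ 1 (deriv (deriv φ)) := hφ.deriv'.deriv'
  have hφ''' : Continuous (deriv (deriv (deriv φ))) := hφ''.continuous_deriv le_rfl
  have hPN : P ≤ N ^ 2 := by
    nlinarith [Real.sq_sqrt (integral_nonneg fun _ => sq_nonneg _ : 0 ≤ P),
      Real.sqrt_nonneg P, Real.sqrt_nonneg Q]
  have ha : |deriv (deriv φ) 0| ≤ 2 * N := by
    have h := sqrt_mul_abs_apply_zero_le hφ'' zero_le_two
    have : 1 ≤ √2 := Real.one_le_sqrt.mpr one_le_two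
    nlinarith [abs_nonneg (deriv (deriv φ) 0), Real.sqrt_nonneg P, Real.sqrt_nonneg Q]
  have hpt (y : ℝ) (hy : y ∈ Ioo 0 1) : |deriv (deriv fun z => φ z / ub z) y| ≤
      2 * c * |deriv (deriv φ) 0| + 6 * c * ((∫ s in 0..y, |deriv (deriv (deriv φ)) s|) / y) :=
    (abs_deriv_deriv_div_le hφ (hub.of_le (by norm_num)) hφ₀ hφ₁ hub₀
      (fun x hx => (hbound x hx).2.1) (fun x hx => (hbound x hx).2.2.1) hm hy
      (by simpa [min_eq_left hy.2.le] using hlow y hy.1.le)).trans_eq (by ring)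
  have hG := integral_sq_le_of_abs_le_add measurableSet_Ioo measure_Ioo_lt_top
    (memLp_integral_div hφ'''.abs 1 2).integrable_sq hpt
  rw [Real.volume_real_Ioo_of_le zero_le_one, sub_zero, mul_one] at hG
  have hhardy := integral_sq_integral_abs_div_le hφ''' zero_le_one one_le_two
  calc _ ≤ √((18 * c * N) ^ 2) := by
        refine Real.sqrt_le_sqrt (hG.trans ?_)
        calc _ ≤ 2 * (2 * c * (2 * N)) ^ 2 + 2 * (6 * c) ^ 2 * (4 * N ^ 2) := by gcongr; linarith
          _ ≤ _ := by nlinarith [sq_nonneg (c * N)]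
    _ = 18 * c * N := Real.sqrt_sq (by positivity)
    _ ≤ (18 * c + 1) * N := by nlinarith [show 0 ≤ N by positivity]

/-- Regularity of the quotient `g = φ / ū` near the degenerate point `y = 0`. -/
theorem stmt14 (m A : ℝ) (hm : 0 < m) (hA : 0 < A) :
    ∃ C > 0, ∀ (φ ub : ℝ → ℝ),
      ContDiff ℝ 3 φ → ContDiff ℝ 3 ub →
      φ 0 = 0 → deriv φ 0 = 0 →
      ub 0 = 0 → 0 < deriv ub 0 → (∀ y : ℝ, 0 < y → 0 < ub y) →
      (∀ y : ℝ, 0 ≤ y →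
        |ub y| ≤ A ∧ |deriv ub y| ≤ A ∧ |deriv (deriv ub) y| ≤ A ∧
          |deriv (deriv (deriv ub)) y| ≤ A) →
      (∀ y : ℝ, 0 ≤ y → m * min y 1 ≤ ub y) →
      -- the quotient extends with value `0` at `y = 0`
      (fun y => φ y / ub y) 0 = 0 ∧
      Real.sqrt (∫ y in Ioo (0:ℝ) 1, deriv (deriv (fun y' => φ y' / ub y')) y ^ 2)
        ≤ C * (Real.sqrt (∫ y in Ioo (0:ℝ) 2, deriv (deriv (deriv φ)) y ^ 2)
          + Real.sqrt (∫ y in Ioo (0:ℝ) 2, deriv (deriv φ) y ^ 2)) :=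
  stmt14_general m A hm
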